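/- Let Φ denote the standard normal CDF. Fix σ₁ ≥ σ₂ > 0, ρ ∈ (0,1), and c with c_h := σ₂/(σ₁ + (1+ρ)σ₂) < c < 1. Then there exists M > 0 such that for all μ > M: Φ((1-c)μ/√(σ₁² + σ₂² + 2ρσ₁σ₂)) + Φ(-cμ/σ₂) < Φ((1-c)μ/(σ₁+ρσ₂)) + Φ(-cμ/(ρσ₂)). -/

import Mathlib

open MeasureTheory ProbabilityTheory Filter

/-- The standard normal cumulative distribution function. -/
noncomputable def Phi (x : ℝ) : ℝ := cdf (gaussianReal 0 1) x

lemma Phi_eq_integral (x : ℝ) :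
    Phi x = ∫ t in Set.Iic x, gaussianPDFReal 0 1 t := by
  rw [Phi, cdf_eq_real, measureReal_def, gaussianReal_apply_eq_integral 0 one_ne_zero,
    ENNReal.toReal_ofReal]
  exact integral_nonneg fun t => gaussianPDFReal_nonneg _ _ _

lemma Phi_nonneg (x : ℝ) : 0 ≤ Phi x := cdf_nonneg _ _

lemma Phi_sub_eq (a b : ℝ) (hab : a ≤ b) :
    Phi b - Phi a = ∫ t in Set.Ioc a b, gaussianPDFReal 0 1 t := by
  rw [Phi_eq_integral, Phi_eq_integral, ← Set.Iic_union_Ioc_eq_Iic hab,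
    setIntegral_union (Set.Iic_disjoint_Ioc le_rfl) measurableSet_Ioc
      (integrable_gaussianPDFReal 0 1).integrableOn
      (integrable_gaussianPDFReal 0 1).integrableOn]
  ring

lemma pdf01 (x : ℝ) :
    gaussianPDFReal 0 1 x = (Real.sqrt (2 * Real.pi))⁻¹ * Real.exp (-x ^ 2 / 2) := by
  simp [gaussianPDFReal]

lemma Phi_sub_ge (a b : ℝ) (ha : 0 ≤ a) (hab : a ≤ b) :
    (b - a) * gaussianPDFReal 0 1 b ≤ Phi b - Phi a := by
  rw [Phi_sub_eq a b hab]
  have h1 : ∫ t in Set.Ioc a b, gaussianPDFReal 0 1 b ≤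
      ∫ t in Set.Ioc a b, gaussianPDFReal 0 1 t := by
    refine setIntegral_mono_on (integrableOn_const ?_)
      (integrable_gaussianPDFReal 0 1).integrableOn measurableSet_Ioc ?_
    · simp [Real.volume_Ioc, ENNReal.ofReal_lt_top]
    · intro t ht
      rw [pdf01, pdf01]
      have h2 : t ^ 2 ≤ b ^ 2 := by nlinarith [ht.1, ht.2]
      have h3 : Real.exp (-b ^ 2 / 2) ≤ Real.exp (-t ^ 2 / 2) :=
        Real.exp_le_exp.2 (by linarith)
      have h4 : (0:ℝ) < (Real.sqrt (2 * Real.pi))⁻¹ := by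
        positivity
      nlinarith
  refine le_trans (le_of_eq ?_) h1
  rw [setIntegral_const, Real.volume_real_Ioc_of_le hab, smul_eq_mul]

lemma pdfm1 (m x : ℝ) :
    gaussianPDFReal m 1 x = (Real.sqrt (2 * Real.pi))⁻¹ * Real.exp (-(x - m) ^ 2 / 2) := by
  simp [gaussianPDFReal]

lemma Phi_neg_le (B : ℝ) (hB : 0 ≤ B) : Phi (-B) ≤ Real.exp (-B ^ 2 / 2) := by
  have key : ∀ t ∈ Set.Iic (-B), gaussianPDFReal 0 1 t ≤
      Real.exp (-B ^ 2 / 2) * gaussianPDFReal (-B) 1 t := by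
    intro t ht
    simp only [Set.mem_Iic] at ht
    rw [pdf01, pdfm1]
    have h4 : (0:ℝ) < (Real.sqrt (2 * Real.pi))⁻¹ := by positivity
    have hexp : Real.exp (-t ^ 2 / 2) ≤
        Real.exp (-B ^ 2 / 2) * Real.exp (-(t - -B) ^ 2 / 2) := by
      rw [← Real.exp_add]
      refine Real.exp_le_exp.2 ?_
      nlinarith [mul_nonneg hB (by linarith : (0:ℝ) ≤ -(t + B))]
    nlinarith
  have h1 : Phi (-B) ≤ ∫ t in Set.Iic (-B),
      Real.exp (-B ^ 2 / 2) * gaussianPDFReal (-B) 1 t := by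
    rw [Phi_eq_integral]
    refine setIntegral_mono_on (integrable_gaussianPDFReal 0 1).integrableOn
      (((integrable_gaussianPDFReal (-B) 1).const_mul _).integrableOn) measurableSet_Iic key
  refine h1.trans ?_
  have h2 : ∫ t in Set.Iic (-B), Real.exp (-B ^ 2 / 2) * gaussianPDFReal (-B) 1 t ≤
      ∫ t, Real.exp (-B ^ 2 / 2) * gaussianPDFReal (-B) 1 t := by
    refine setIntegral_le_integral ((integrable_gaussianPDFReal (-B) 1).const_mul _) ?_
    exact Filter.Eventually.of_forall fun t =>
      mul_nonneg (Real.exp_nonneg _) (gaussianPDFReal_nonneg _ _ _)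
  refine h2.trans (le_of_eq ?_)
  rw [integral_const_mul, integral_gaussianPDFReal_eq_one _ one_ne_zero, mul_one]

lemma key_lemma (α γ β β₂ : ℝ) (hα : 0 < α) (hαγ : α < γ) (hγβ : γ ≤ β) :
    ∃ M : ℝ, 0 < M ∧ ∀ μ : ℝ, M < μ →
      Phi (α * μ) + Phi (-(β * μ)) < Phi (γ * μ) + Phi (-(β₂ * μ)) := by
  set k := γ - α with hk
  have hk0 : 0 < k := by simp [hk]; linarith
  refine ⟨max 1 (Real.sqrt (2 * Real.pi) / k), lt_max_of_lt_left one_pos, fun μ hμ => ?_⟩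
  have hμ1 : 1 < μ := lt_of_le_of_lt (le_max_left _ _) hμ
  have hμ0 : 0 < μ := by linarith
  have hγ : 0 < γ := hα.trans hαγ
  have hγμ : 0 ≤ γ * μ := by positivity
  have hβμ : 0 ≤ β * μ := by nlinarith
  -- upper tail bound
  have h1 : Phi (-(β * μ)) ≤ Real.exp (-(β * μ) ^ 2 / 2) := Phi_neg_le _ hβμ
  have h2 : Real.exp (-(β * μ) ^ 2 / 2) ≤ Real.exp (-(γ * μ) ^ 2 / 2) := by
    refine Real.exp_le_exp.2 ?_
    have hle : γ * μ ≤ β * μ := mul_le_mul_of_nonneg_right hγβ hμ0.le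
    have : (γ * μ) ^ 2 ≤ (β * μ) ^ 2 := pow_le_pow_left₀ hγμ hle 2
    linarith
  -- lower bound on the gap
  have h3 : (γ * μ - α * μ) * gaussianPDFReal 0 1 (γ * μ) ≤ Phi (γ * μ) - Phi (α * μ) :=
    Phi_sub_ge _ _ (by positivity) (by nlinarith)
  have h4 : Real.exp (-(γ * μ) ^ 2 / 2) < (γ * μ - α * μ) * gaussianPDFReal 0 1 (γ * μ) := by
    rw [pdf01]
    have hs : 0 < Real.sqrt (2 * Real.pi) := Real.sqrt_pos.2 (by positivity)
    have hkμ : Real.sqrt (2 * Real.pi) < k * μ := by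
      have h5 : Real.sqrt (2 * Real.pi) / k < μ := lt_of_le_of_lt (le_max_right _ _) hμ
      calc Real.sqrt (2 * Real.pi) = k * (Real.sqrt (2 * Real.pi) / k) := by
            field_simp
        _ < k * μ := by exact mul_lt_mul_of_pos_left h5 hk0
    have hexp : 0 < Real.exp (-(γ * μ) ^ 2 / 2) := Real.exp_pos _
    have h6 : γ * μ - α * μ = k * μ := by ring
    rw [h6]
    have h7 : 1 < k * μ * (Real.sqrt (2 * Real.pi))⁻¹ := by
      rw [← div_eq_mul_inv]
      exact (one_lt_div hs).2 hkμ
    nlinarith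
  have h8 : 0 ≤ Phi (-(β₂ * μ)) := Phi_nonneg _
  linarith

/-- Lemma 3 (bothVs1), second part: for `c > c_h` and high precision, full discovery
beats discovering only the trial balloon. -/
theorem full_discovery_eventually_beats_trial_balloon
    (σ₁ σ₂ ρ c : ℝ) (hσ₂ : 0 < σ₂) (hσ : σ₂ ≤ σ₁) (hρ : ρ ∈ Set.Ioo (0 : ℝ) 1)
    (hc : c ∈ Set.Ioo (σ₂ / (σ₁ + (1 + ρ) * σ₂)) 1) :
    ∃ M : ℝ, 0 < M ∧ ∀ μ : ℝ, M < μ →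
      Phi ((1 - c) * μ / Real.sqrt (σ₁ ^ 2 + σ₂ ^ 2 + 2 * ρ * σ₁ * σ₂))
          + Phi (-c * μ / σ₂) <
        Phi ((1 - c) * μ / (σ₁ + ρ * σ₂)) + Phi (-c * μ / (ρ * σ₂)) := by
  obtain ⟨hρ0, hρ1⟩ := hρ
  obtain ⟨hc1, hc2⟩ := hc
  have hσ₁ : 0 < σ₁ := lt_of_lt_of_le hσ₂ hσ
  set s := Real.sqrt (σ₁ ^ 2 + σ₂ ^ 2 + 2 * ρ * σ₁ * σ₂) with hs
  have hD : 0 < σ₁ + (1 + ρ) * σ₂ := by nlinarith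
  have hc0 : 0 < c := lt_trans (by positivity) hc1
  have h1c : 0 < 1 - c := by linarith
  have hden : 0 < σ₁ + ρ * σ₂ := by nlinarith
  have hX : 0 < σ₁ ^ 2 + σ₂ ^ 2 + 2 * ρ * σ₁ * σ₂ := by
    nlinarith [mul_pos (mul_pos hρ0 hσ₁) hσ₂, pow_pos hσ₁ 2, pow_pos hσ₂ 2]
  have hslt : σ₁ + ρ * σ₂ < s := by
    rw [hs]
    refine (Real.lt_sqrt hden.le).2 ?_
    nlinarith [mul_pos (mul_pos (mul_pos hσ₂ hσ₂) (by linarith : (0:ℝ) < 1 - ρ))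
      (by linarith : (0:ℝ) < 1 + ρ)]
  have hspos : 0 < s := lt_trans hden hslt
  have hcD : σ₂ < c * (σ₁ + (1 + ρ) * σ₂) := (div_lt_iff₀ hD).1 hc1
  have hαγ : (1 - c) / s < (1 - c) / (σ₁ + ρ * σ₂) :=
    div_lt_div_of_pos_left h1c hden hslt
  have hγβ : (1 - c) / (σ₁ + ρ * σ₂) ≤ c / σ₂ := by
    rw [div_le_div_iff₀ hden hσ₂]
    nlinarith
  obtain ⟨M, hM0, hM⟩ := key_lemma ((1 - c) / s) ((1 - c) / (σ₁ + ρ * σ₂)) (c / σ₂)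
    (c / (ρ * σ₂)) (by positivity) hαγ hγβ
  refine ⟨M, hM0, fun μ hμ => ?_⟩
  have h := hM μ hμ
  have e1 : (1 - c) / s * μ = (1 - c) * μ / s := by ring
  have e2 : -(c / σ₂ * μ) = -c * μ / σ₂ := by ring
  have e3 : (1 - c) / (σ₁ + ρ * σ₂) * μ = (1 - c) * μ / (σ₁ + ρ * σ₂) := by ring
  have e4 : -(c / (ρ * σ₂) * μ) = -c * μ / (ρ * σ₂) := by ring
  rw [e1, e2, e3, e4] at h
  exact h
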